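/- Let (a,b,c) be an ABC-solution, n ≥ 2 an even integer, ε > 0, and (A,B,C) = Θ_n(a,b,c). Then log C ≥ [n(1+ε)/(n + nε − ε)]·(log rad(|A·B·C|) + (1+ε)^{−1}·f((a,b,c),ε) − log(2n)) − n·log 2. -/

import Mathlib

/-! Write d = a - b and n = 2k. Up to a common factor 2^m with m ≤ n, Θ_n(a,b,c) is
(-dⁿ, dⁿ - cⁿ, cⁿ), and cⁿ - dⁿ = (c² - d²)·S = 4ab·S with S = ∑ c^{2i} d^{2(k-1-i)} ≤ k c^{n-2},
since |d| ≤ c. Every prime factor of ABC therefore divides abc·4dS, which gives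
rad(ABC) ≤ rad(abc)·4|d|S ≤ 2n·rad(abc)·c^{n-1}. Together with log C ≥ n log c - n log 2, the claimed
inequality is this radical estimate after taking logarithms and rescaling by n(1+ε)/(n+nε-ε). -/

/-- An ABC-solution: distinct, pairwise coprime integers with a+b+c = 0, a < 0, b < 0. -/
def IsABCSolution (a b c : ℤ) : Prop :=
  a + b + c = 0 ∧ a < 0 ∧ b < 0 ∧
  a ≠ b ∧ b ≠ c ∧ a ≠ c ∧
  IsCoprime a b ∧ IsCoprime b c ∧ IsCoprime a c

/-- The radical of a natural number: the product of its distinct prime factors. -/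
def rad (n : ℕ) : ℕ := ∏ p ∈ n.primeFactors, p

/-- The quality function f((a,b,c),ε) = log c − (1+ε)·log rad(|a·b·c|). -/
noncomputable def fABC (a b c : ℤ) (ε : ℝ) : ℝ :=
  Real.log (c : ℝ) - (1 + ε) * Real.log (rad (a * b * c).natAbs : ℝ)

/-- The operation Θ_n on ABC-solutions, with m = n if c is even and m = 0 otherwise.
The divisions are exact integer divisions. -/
def theta (n : ℕ) (a b c : ℤ) : ℤ × ℤ × ℤ :=
  let m : ℕ := if 2 ∣ c then n else 0
  (-((a - b) ^ n / 2 ^ m), -((c ^ n - (a - b) ^ n) / 2 ^ m), c ^ n / 2 ^ m)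

open Finset Real

lemma rad_pos (n : ℕ) : 0 < rad n :=
  prod_pos fun _ hp => (Nat.prime_of_mem_primeFactors hp).pos

lemma rad_le {n : ℕ} (hn : n ≠ 0) : rad n ≤ n :=
  Nat.le_of_dvd (Nat.pos_of_ne_zero hn) (Nat.prod_primeFactors_dvd n)

lemma rad_mul_le (m n : ℕ) : rad (m * n) ≤ rad m * rad n := by
  rcases eq_or_ne m 0 with rfl | hm
  · simp only [zero_mul]; exact Nat.le_mul_of_pos_right _ (rad_pos n)
  rcases eq_or_ne n 0 with rfl | hn
  · simp only [mul_zero]; exact Nat.le_mul_of_pos_left _ (rad_pos m)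
  rw [rad, rad, rad, Nat.primeFactors_mul hm hn, ← prod_union_inter]
  exact Nat.le_mul_of_pos_right _ (prod_pos fun _ hp =>
    (Nat.prime_of_mem_primeFactors (mem_inter.mp hp).1).pos)

lemma rad_mul_le_rad_mul (m : ℕ) {n : ℕ} (hn : n ≠ 0) : rad (m * n) ≤ rad m * n :=
  (rad_mul_le m n).trans (Nat.mul_le_mul_left _ (rad_le hn))

lemma rad_le_rad_of_dvd_pow {m n k : ℕ} (hn : n ≠ 0) (hk : k ≠ 0) (h : m ∣ n ^ k) :
    rad m ≤ rad n := by
  refine Nat.le_of_dvd (rad_pos n) (prod_dvd_prod_of_subset _ _ _ ?_)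
  rw [← Nat.primeFactors_pow n hk]
  exact Nat.primeFactors_mono h (pow_ne_zero k hn)

lemma geom_sum₂_le_mul_pow {R : Type*} [Semiring R] [PartialOrder R] [IsOrderedRing R]
    {x y : R} (hy : 0 ≤ y) (hyx : y ≤ x) (n : ℕ) :
    ∑ i ∈ range n, x ^ i * y ^ (n - 1 - i) ≤ n * x ^ (n - 1) :=
  (sum_le_sum fun _ _ => mul_le_mul_of_nonneg_left (pow_le_pow_left₀ hy hyx _)
    (pow_nonneg (hy.trans hyx) _)).trans_eq (geom_sum₂_self x n)

lemma exists_pow_add_self_sub_pow_eq {R : Type*} [CommRing R] [LinearOrder R]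
    [IsStrictOrderedRing R] {x y : R} (hyx : |y| ≤ x) (hy : y ≠ 0) {k : ℕ} (hk : k ≠ 0) :
    ∃ S, 0 < S ∧ S ≤ k * (x ^ 2) ^ (k - 1) ∧ x ^ (k + k) - y ^ (k + k) = (x ^ 2 - y ^ 2) * S := by
  have hx : 0 < x := (abs_pos.mpr hy).trans_le hyx
  refine ⟨∑ i ∈ range k, (x ^ 2) ^ i * (y ^ 2) ^ (k - 1 - i),
    sum_pos (fun i _ => by positivity) (nonempty_range_iff.mpr hk),
    geom_sum₂_le_mul_pow (sq_nonneg y) (sq_le_sq' (neg_le_of_abs_le hyx) (le_of_abs_le hyx)) k, ?_⟩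
  rw [← two_mul, pow_mul, pow_mul, mul_comm, geom_sum₂_mul]

section Theta

variable {a b c : ℤ}

lemma exists_theta_mul_two_pow (h : a + b + c = 0) (n : ℕ) :
    ∃ m ≤ n, (theta n a b c).1 * 2 ^ m = -(a - b) ^ n ∧
      (theta n a b c).2.1 * 2 ^ m = -(c ^ n - (a - b) ^ n) ∧
      (theta n a b c).2.2 * 2 ^ m = c ^ n := by
  by_cases hc : 2 ∣ c
  · have hd : 2 ∣ a - b := ⟨-b - c / 2, by omega⟩
    have hdn := pow_dvd_pow_of_dvd hd n
    have hcn := pow_dvd_pow_of_dvd hc n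
    refine ⟨n, le_rfl, ?_⟩
    simp only [theta, hc, if_true, neg_mul, Int.ediv_mul_cancel hdn, Int.ediv_mul_cancel hcn,
      Int.ediv_mul_cancel (dvd_sub hcn hdn), and_self]
  · exact ⟨0, n.zero_le, by simp [theta, hc]⟩

lemma theta_prod_dvd (h : a + b + c = 0) (n : ℕ) :
    (theta n a b c).1 * (theta n a b c).2.1 * (theta n a b c).2.2 ∣
      (a - b) ^ n * (c ^ n - (a - b) ^ n) * c ^ n := by
  obtain ⟨m, -, hA, hB, hC⟩ := exists_theta_mul_two_pow h n
  have hprod : (a - b) ^ n * (c ^ n - (a - b) ^ n) * c ^ n =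
      -((theta n a b c).1 * 2 ^ m) * -((theta n a b c).2.1 * 2 ^ m) *
        ((theta n a b c).2.2 * 2 ^ m) := by
    rw [hA, hB, hC]; ring
  exact ⟨(2 ^ m) ^ 3, hprod.trans (by ring)⟩

lemma rad_theta_mul_le (hsum : a + b + c = 0) (ha : a < 0) (hb : b < 0) (hab : a ≠ b) {n : ℕ}
    (hn : n ≠ 0) (hev : Even n) :
    (rad ((theta n a b c).1 * (theta n a b c).2.1 * (theta n a b c).2.2).natAbs : ℤ) * c ≤
      2 * n * rad (a * b * c).natAbs * c ^ n := by
  obtain ⟨k, rfl⟩ := hev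
  have hk : k ≠ 0 := by omega
  have hc : 0 < c := by linarith
  have hd : a - b ≠ 0 := sub_ne_zero.mpr hab
  have hdc : |a - b| ≤ c := abs_le.mpr ⟨by linarith, by linarith⟩
  obtain ⟨S, hS, hSle, hX⟩ := exists_pow_add_self_sub_pow_eq hdc hd hk
  have h4ab : c ^ 2 - (a - b) ^ 2 = 4 * a * b := by linear_combination (c - a - b) * hsum
  rw [h4ab] at hX
  have hdvd : (theta (k + k) a b c).1 * (theta (k + k) a b c).2.1 * (theta (k + k) a b c).2.2 ∣
      (a * b * c * (4 * (a - b) * S)) ^ (k + k) :=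
    calc _ ∣ (a - b) ^ (k + k) * (c ^ (k + k) - (a - b) ^ (k + k)) * c ^ (k + k) :=
          theta_prod_dvd hsum _
      _ = (a - b) ^ (k + k) * (4 * a * b * S) * c ^ (k + k) := by rw [hX]
      _ ∣ (a - b) ^ (k + k) * (4 * a * b * S) ^ (k + k) * c ^ (k + k) := by
          gcongr; exact dvd_pow_self _ hn
      _ = (a * b * c * (4 * (a - b) * S)) ^ (k + k) := by simp only [mul_pow]; ring
  have hrad : rad ((theta (k + k) a b c).1 * (theta (k + k) a b c).2.1 *
      (theta (k + k) a b c).2.2).natAbs ≤ rad (a * b * c).natAbs * (4 * (a - b) * S).natAbs :=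
    calc _ ≤ rad (a * b * c * (4 * (a - b) * S)).natAbs := by
          refine rad_le_rad_of_dvd_pow ?_ hn ?_
          · simp [ha.ne, hb.ne, hc.ne', hd, hS.ne']
          · rw [← Int.natAbs_pow]; exact Int.natAbs_dvd_natAbs.mpr hdvd
      _ ≤ rad (a * b * c).natAbs * (4 * (a - b) * S).natAbs := by
          rw [Int.natAbs_mul]
          exact rad_mul_le_rad_mul _ (by simp [hd, hS.ne'])
  have hc2 : c ^ 2 * (c ^ 2) ^ (k - 1) = c ^ (k + k) := by
    rw [← pow_succ', Nat.sub_add_cancel (Nat.one_le_iff_ne_zero.mpr hk), ← pow_mul, two_mul]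
  calc _ ≤ (rad (a * b * c).natAbs : ℤ) * (4 * |a - b| * S) * c := by
        gcongr
        simpa [abs_mul, abs_of_pos hS] using (Nat.cast_le (α := ℤ)).mpr hrad
    _ ≤ (rad (a * b * c).natAbs : ℤ) * (4 * c * (k * (c ^ 2) ^ (k - 1))) * c := by
        gcongr
    _ = 2 * ↑(k + k) * rad (a * b * c).natAbs * c ^ (k + k) := by
        rw [← hc2]; push_cast; ring

end Theta

lemma rescale_log_rad_bound {n ε L R N T : ℝ} (hn : 1 ≤ n) (hε : 0 < ε)
    (h : N + L ≤ T + R + n * L) :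
    n * (1 + ε) / (n + n * ε - ε) * (N + (1 + ε)⁻¹ * (L - (1 + ε) * R) - T) ≤ n * L := by
  have hε' : (0 : ℝ) < 1 + ε := by linarith
  have hD : 0 < n * (1 + ε) - ε := by nlinarith
  have hsplit : (1 + ε)⁻¹ * (L - (1 + ε) * R) = (1 + ε)⁻¹ * L - R := by field_simp
  have hweight : (n + n * ε - ε) / (1 + ε) * L = (n - 1) * L + (1 + ε)⁻¹ * L := by
    field_simp; ring
  calc n * (1 + ε) / (n + n * ε - ε) * (N + (1 + ε)⁻¹ * (L - (1 + ε) * R) - T)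
      ≤ n * (1 + ε) / (n + n * ε - ε) * ((n + n * ε - ε) / (1 + ε) * L) := by
        refine mul_le_mul_of_nonneg_left ?_ (div_nonneg (by positivity) (by linarith))
        linarith
    _ = n * L := by field_simp

theorem log_C_ge_general (a b c : ℤ) (h : IsABCSolution a b c)
    (n : ℕ) (hev : Even n) (ε : ℝ) (hε : 0 < ε) :
    Real.log ((theta n a b c).2.2 : ℝ) ≥
      ((n : ℝ) * (1 + ε) / (n + n * ε - ε)) *
        (Real.log (rad ((theta n a b c).1 * (theta n a b c).2.1 *
            (theta n a b c).2.2).natAbs : ℝ) +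
          (1 + ε)⁻¹ * fABC a b c ε - Real.log (2 * n)) -
      n * Real.log 2 := by
  obtain ⟨hsum, ha, hb, hab, -⟩ := h
  rcases eq_or_ne n 0 with rfl | hn
  · -- Θ₀(a, b, c) = (-1, 0, 1), and both sides vanish
    simp [theta]
  have hc : (0 : ℝ) < c := by exact_mod_cast (by linarith : (0 : ℤ) < c)
  obtain ⟨m, hmn, -, -, hC⟩ := exists_theta_mul_two_pow hsum n
  have hCR : ((theta n a b c).2.2 : ℝ) * 2 ^ m = (c : ℝ) ^ n := by exact_mod_cast hC
  have hCpos : (0 : ℝ) < (theta n a b c).2.2 :=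
    pos_of_mul_pos_left (hCR ▸ pow_pos hc n) (by positivity)
  have hlogC : log ((theta n a b c).2.2 : ℝ) + m * log 2 = n * log c := by
    simpa [log_mul hCpos.ne', log_pow] using congrArg log hCR
  have hN : (0 : ℝ) < rad ((theta n a b c).1 * (theta n a b c).2.1 * (theta n a b c).2.2).natAbs :=
    mod_cast rad_pos _
  have hR : (0 : ℝ) < rad (a * b * c).natAbs := mod_cast rad_pos _
  have hrad := (Int.cast_le (R := ℝ)).mpr (rad_theta_mul_le hsum ha hb hab hn hev)
  push_cast at hrad
  have hlog_rad := log_le_log (mul_pos hN hc) hrad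
  rw [log_mul hN.ne' hc.ne', log_mul (by positivity) (by positivity),
    log_mul (by positivity) hR.ne', log_pow] at hlog_rad
  have := rescale_log_rad_bound (mod_cast Nat.one_le_iff_ne_zero.mpr hn) hε hlog_rad
  have hm : m * log 2 ≤ n * log 2 := by gcongr
  unfold fABC
  linarith

/-- lower bound for log C in terms of rad(|ABC|) and f((a,b,c),ε),
where (A,B,C) = Θ_n(a,b,c). -/
theorem log_C_ge (a b c : ℤ) (h : IsABCSolution a b c)
    (n : ℕ) (hn : 2 ≤ n) (hev : Even n) (ε : ℝ) (hε : 0 < ε) :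
    Real.log ((theta n a b c).2.2 : ℝ) ≥
      ((n : ℝ) * (1 + ε) / (n + n * ε - ε)) *
        (Real.log (rad ((theta n a b c).1 * (theta n a b c).2.1 *
            (theta n a b c).2.2).natAbs : ℝ) +
          (1 + ε)⁻¹ * fABC a b c ε - Real.log (2 * n)) -
      n * Real.log 2 :=
  log_C_ge_general a b c h n hev ε hε
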